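/- arXiv:2510.02062 — 6 statements merged into one kernel-verified Lean document; each statement's English description precedes it below -/
import Mathlib

section
/- Let G = (L ∪ R, E) be a bipartite graph. If there is a matching covering a subset L' ⊆ L and a matching covering a subset R' ⊆ R, then there is a single matching covering L' ∪ R'. -/
/-- `M` is a matching in the bipartite graph with edge set `E ⊆ L × R`:
a set of pairwise non-adjacent edges. -/
def IsBipMatching {L R : Type*} (E M : Set (L × R)) : Prop :=
  M ⊆ E ∧ ∀ e ∈ M, ∀ f ∈ M, e ≠ f → e.1 ≠ f.1 ∧ e.2 ≠ f.2

/-- `M` covers every left vertex in `L'`. -/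
def CoversL {L R : Type*} (M : Set (L × R)) (L' : Set L) : Prop :=
  ∀ l ∈ L', ∃ e ∈ M, e.1 = l

/-- `M` covers every right vertex in `R'`. -/
def CoversR {L R : Type*} (M : Set (L × R)) (R' : Set R) : Prop :=
  ∀ r ∈ R', ∃ e ∈ M, e.2 = r

/-- Auxiliary inductive predicate: the left vertices reachable by a
Cantor–Schröder–Bernstein style forward chain starting at a left vertex
not hit by `g`. -/
inductive MDChain {L R : Type*} (L' : Set L) (R' : Set R) (f : L → R) (g : R → L) : L → Prop
  | base (l : L) (hl : l ∈ L') (h : ∀ r ∈ R', g r ≠ l) : MDChain L' R' f g l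
  | step (l : L) (h : MDChain L' R' f g l) (hf : f l ∈ R') (hl : g (f l) ∈ L') :
      MDChain L' R' f g (g (f l))

theorem MDChain.mem {L R : Type*} {L' : Set L} {R' : Set R} {f : L → R} {g : R → L} {l : L}
    (h : MDChain L' R' f g l) : l ∈ L' := by
  cases h with
  | base l hl _ => exact hl
  | step l _ _ hl => exact hl

theorem matching_union {L R : Type*} (E : Set (L × R)) (L' : Set L) (R' : Set R)
    (h₁ : ∃ M₁, IsBipMatching E M₁ ∧ CoversL M₁ L')
    (h₂ : ∃ M₂, IsBipMatching E M₂ ∧ CoversR M₂ R') :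
    ∃ M, IsBipMatching E M ∧ CoversL M L' ∧ CoversR M R' := by
  obtain ⟨M₁, hM₁, hC₁⟩ := h₁
  obtain ⟨M₂, hM₂, hC₂⟩ := h₂
  rcases Set.eq_empty_or_nonempty L' with hL' | ⟨l₀, hl₀⟩
  · exact ⟨M₂, hM₂, fun l hl => absurd hl (by simp [hL']), hC₂⟩
  rcases Set.eq_empty_or_nonempty R' with hR' | ⟨r₀, hr₀⟩
  · exact ⟨M₁, hM₁, hC₁, fun r hr => absurd hr (by simp [hR'])⟩
  classical
  choose e₁ he₁ hfst using hC₁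
  choose e₂ he₂ hsnd using hC₂
  set f : L → R := fun l => if h : l ∈ L' then (e₁ l h).2 else (e₁ l₀ hl₀).2 with hfdef
  set g : R → L := fun r => if h : r ∈ R' then (e₂ r h).1 else (e₂ r₀ hr₀).1 with hgdef
  have hfM : ∀ l (hl : l ∈ L'), (l, f l) ∈ M₁ := by
    intro l hl
    have h2 : (l, f l) = e₁ l hl := by
      simp only [hfdef, dif_pos hl]
      exact Prod.ext (hfst l hl).symm rfl
    rw [h2]; exact he₁ l hl
  have hgM : ∀ r (hr : r ∈ R'), (g r, r) ∈ M₂ := by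
    intro r hr
    have h2 : (g r, r) = e₂ r hr := by
      simp only [hgdef, dif_pos hr]
      exact Prod.ext rfl (hsnd r hr).symm
    rw [h2]; exact he₂ r hr
  have finj : ∀ l ∈ L', ∀ l' ∈ L', l ≠ l' → f l ≠ f l' := by
    intro l hl l' hl' hne
    have h := hM₁.2 (l, f l) (hfM l hl) (l', f l') (hfM l' hl')
      (by simp [Prod.ext_iff]; intro h; exact absurd h hne)
    exact h.2
  have ginj : ∀ r ∈ R', ∀ r' ∈ R', g r = g r' → r = r' := by
    intro r hr r' hr' heq
    by_contra hne
    have h := hM₂.2 (g r, r) (hgM r hr) (g r', r') (hgM r' hr')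
      (fun h => hne (congrArg Prod.snd h))
    exact h.1 heq
  set M : Set (L × R) := {e | (∃ l, MDChain L' R' f g l ∧ e = (l, f l)) ∨
    (∃ r, r ∈ R' ∧ (∀ l, MDChain L' R' f g l → f l ≠ r) ∧ e = (g r, r))} with hMdef
  refine ⟨M, ⟨?_, ?_⟩, ?_, ?_⟩
  · -- M ⊆ E
    rintro e (⟨l, hc, rfl⟩ | ⟨r, hr, -, rfl⟩)
    · exact hM₁.1 (hfM l hc.mem)
    · exact hM₂.1 (hgM r hr)
  · -- pairwise non-adjacent
    rintro e (⟨l, hc, rfl⟩ | ⟨r, hr, hnr, rfl⟩) e' (⟨l', hc', rfl⟩ | ⟨r', hr', hnr', rfl⟩) hne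
    · -- two f-edges
      have hll : l ≠ l' := fun h => hne (by rw [h])
      exact ⟨hll, finj l hc.mem l' hc'.mem hll⟩
    · -- f-edge vs g-edge
      have hsnd : f l ≠ r' := hnr' l hc
      refine ⟨?_, hsnd⟩
      intro heq  -- heq : l = g r'
      cases hc with
      | base l hl h => exact h r' hr' heq.symm
      | step l' hc'' hf' hl' =>
        -- here the chain element is g (f l'), and g (f l') = g r'
        exact hnr' l' hc'' (ginj (f l') hf' r' hr' heq)
    · -- g-edge vs f-edge
      have hsnd : f l' ≠ r := hnr l' hc'
      refine ⟨?_, fun h => hsnd h.symm⟩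
      intro heq  -- heq : g r = l'
      cases hc' with
      | base l hl h => exact h r hr heq
      | step l'' hc'' hf' hl' =>
        exact hnr l'' hc'' (ginj (f l'') hf' r hr heq.symm)
    · -- two g-edges
      have hrr : r ≠ r' := fun h => hne (by rw [h])
      exact ⟨fun h => hrr (ginj r hr r' hr' h), hrr⟩
  · -- CoversL
    intro l hl
    by_cases hc : MDChain L' R' f g l
    · exact ⟨(l, f l), Or.inl ⟨l, hc, rfl⟩, rfl⟩
    · have : ∃ r ∈ R', g r = l := by
        by_contra h
        push_neg at h
        exact hc (MDChain.base l hl h)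
      obtain ⟨r, hr, hgr⟩ := this
      refine ⟨(g r, r), Or.inr ⟨r, hr, ?_, rfl⟩, hgr⟩
      intro l'' hc'' hfeq
      apply hc
      have := MDChain.step l'' hc'' (hfeq ▸ hr) (by rw [hfeq, hgr]; exact hl)
      rwa [hfeq, hgr] at this
  · -- CoversR
    intro r hr
    by_cases hc : ∃ l, MDChain L' R' f g l ∧ f l = r
    · obtain ⟨l, hcl, hfl⟩ := hc
      exact ⟨(l, f l), Or.inl ⟨l, hcl, rfl⟩, hfl⟩
    · push_neg at hc
      exact ⟨(g r, r), Or.inr ⟨r, hr, hc, rfl⟩, rfl⟩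
end

section
/- Let S = Def(α₁, …, αₙ; α) be a skolemian set, let w ∈ (ℕ_{>0})^ד, let P be the (finite) set of primes p with v_p(w) ≠ 0, let P₀ ⊆ P be those p ∈ P with v_p(w) ∉ α, and let G be the bipartite graph on P ∪ [n] with an edge (p, i) iff v_p(w) ∈ α_i. Then w ∈ S if and only if (a) there is a matching of P₀ in G and (b) there is a matching of [n] in G. -/
/-- Componentwise `p`-adic valuation of a vector `w ∈ ℕ^d`. -/
def vp {d : ℕ} (p : ℕ) (w : Fin d → ℕ) : Fin d → ℕ := fun t => padicValNat p (w t)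

/-- The skolemian set `Def(α₁, …; α)` determined by a family of exceptional
semilinear sets `αs` (indexed by `ι`) and a default set `α`: the set of vectors
`w ∈ (ℕ_{>0})^d` such that there are pairwise distinct primes `p i` with
`vp (p i) w ∈ αs i`, and `vp q w ∈ α` for every other prime `q` with
`vp q w ≠ 0`. -/
def SkolemDef {d : ℕ} {ι : Type} (αs : ι → Set (Fin d → ℕ)) (α : Set (Fin d → ℕ)) :
    Set (Fin d → ℕ) :=
  {w | (∀ t, 0 < w t) ∧ ∃ p : ι → ℕ,
    (∀ i, (p i).Prime) ∧ Function.Injective p ∧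
    (∀ i, vp (p i) w ∈ αs i) ∧
    ∀ q : ℕ, q.Prime → (∀ i, p i ≠ q) → vp q w ≠ 0 → vp q w ∈ α}

/-- A linear subset of `ℕ^d`: a base vector plus arbitrary `ℕ`-combinations of
finitely many period vectors. -/
def IsLinear {d : ℕ} (A : Set (Fin d → ℕ)) : Prop :=
  ∃ (b : Fin d → ℕ) (k : ℕ) (per : Fin k → Fin d → ℕ),
    A = {v | ∃ c : Fin k → ℕ, v = b + ∑ j, c j • per j}

/-- A semilinear subset of `ℕ^d`: a finite union of linear sets. -/
def IsSemilinear {d : ℕ} (A : Set (Fin d → ℕ)) : Prop :=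
  ∃ (m : ℕ) (L : Fin m → Set (Fin d → ℕ)), (∀ i, IsLinear (L i)) ∧ A = ⋃ i, L i

/-- A skolemian subset of `(ℕ_{>0})^d`. -/
def IsSkolemian {d : ℕ} (S : Set (Fin d → ℕ)) : Prop :=
  ∃ (n : ℕ) (αs : Fin n → Set (Fin d → ℕ)) (α : Set (Fin d → ℕ)),
    (∀ i, IsSemilinear (αs i)) ∧ IsSemilinear α ∧ (0 : Fin d → ℕ) ∈ α ∧
    (∀ i, (0 : Fin d → ℕ) ∉ αs i) ∧ S = SkolemDef αs α

/-- A semiskolemian set: a finite union of skolemian sets. -/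
def IsSemiskolemian {d : ℕ} (S : Set (Fin d → ℕ)) : Prop :=
  ∃ (m : ℕ) (T : Fin m → Set (Fin d → ℕ)), (∀ i, IsSkolemian (T i)) ∧ S = ⋃ i, T i

/-- Auxiliary inductive predicate: a right vertex `i` is `Good` if the
alternating chain from `i` (backwards along `M₁` then `M₂` edges) terminates
at a left vertex uncovered by `M₂`. -/
inductive BipGood {L R : Type*} (M₁ M₂ : Set (L × R)) : R → Prop
  | base (q : L) (i : R) : (q, i) ∈ M₁ → (∀ j, (q, j) ∉ M₂) → BipGood M₁ M₂ i
  | step (q : L) (i j : R) : (q, i) ∈ M₁ → (q, j) ∈ M₂ → BipGood M₁ M₂ j →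
      BipGood M₁ M₂ i

lemma matching_left_unique {L R : Type*} {E M : Set (L × R)} (h : IsBipMatching E M)
    {q q' : L} {i : R} (h1 : (q, i) ∈ M) (h2 : (q', i) ∈ M) : q = q' := by
  by_contra hne
  have := h.2 _ h1 _ h2 (by simp [hne])
  exact this.2 rfl

lemma matching_right_unique {L R : Type*} {E M : Set (L × R)} (h : IsBipMatching E M)
    {q : L} {i j : R} (h1 : (q, i) ∈ M) (h2 : (q, j) ∈ M) : i = j := by
  by_contra hne
  have := h.2 _ h1 _ h2 (by simp [hne])
  exact this.1 rfl

/-- Inversion: if `i` is good, `(a,i) ∈ M₁`, and `(a,j) ∈ M₂`, then `j` is good. -/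
lemma bipGood_inv {L R : Type*} {E M₁ M₂ : Set (L × R)}
    (hM₁ : IsBipMatching E M₁) (hM₂ : IsBipMatching E M₂)
    {i : R} (hg : BipGood M₁ M₂ i) {a : L} (ha : (a, i) ∈ M₁)
    {j : R} (haj : (a, j) ∈ M₂) : BipGood M₁ M₂ j := by
  cases hg with
  | base q _ h1 hnone =>
    have hq : q = a := matching_left_unique hM₁ h1 ha
    exact absurd haj (hq ▸ hnone j)
  | step q _ j' h1 hm2 hgj' =>
    have hq : q = a := matching_left_unique hM₁ h1 ha
    have : j' = j := matching_right_unique hM₂ (hq ▸ hm2) haj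
    exact this ▸ hgj'

/-- Claim 1: for `w ∈ (ℕ_{>0})^d` and `S = Def(α₁,…,αₙ;α)`, with `G` the
bipartite graph on `P ∪ [n]` (`P` the primes with `vp p w ≠ 0`, edge `(p,i)`
iff `vp p w ∈ αs i`) and `P₀ = {p ∈ P : vp p w ∉ α}`, we have `w ∈ S` iff
(a) there is a matching of `P₀` in `G` and (b) there is a matching of `[n]` in `G`. -/
theorem mem_skolemDef_iff_matchings {d n : ℕ}
    (αs : Fin n → Set (Fin d → ℕ)) (α : Set (Fin d → ℕ))
    (hsl : ∀ i, IsSemilinear (αs i)) (hslα : IsSemilinear α)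
    (h0α : (0 : Fin d → ℕ) ∈ α) (h0 : ∀ i, (0 : Fin d → ℕ) ∉ αs i)
    (w : Fin d → ℕ) (hw : ∀ t, 0 < w t)
    (E : Set (ℕ × Fin n)) (hE : E = {e | e.1.Prime ∧ vp e.1 w ≠ 0 ∧ vp e.1 w ∈ αs e.2})
    (P₀ : Set ℕ) (hP₀ : P₀ = {q | q.Prime ∧ vp q w ≠ 0 ∧ vp q w ∉ α}) :
    w ∈ SkolemDef αs α ↔
      (∃ M, IsBipMatching E M ∧ CoversL M P₀) ∧
      (∃ M, IsBipMatching E M ∧ CoversR M (Set.univ : Set (Fin n))) := by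
  classical
  subst hE hP₀
  constructor
  · rintro ⟨hw', p, hp, hinj, hα, hdef⟩
    have hvne : ∀ i, vp (p i) w ≠ 0 := by
      intro i hzero
      exact h0 i (hzero ▸ hα i)
    constructor
    · refine ⟨{e | (e.1.Prime ∧ vp e.1 w ≠ 0 ∧ vp e.1 w ∉ α) ∧ p e.2 = e.1}, ⟨?_, ?_⟩, ?_⟩
      · rintro ⟨q, i⟩ ⟨⟨hq1, hq2, _⟩, hpq⟩
        exact ⟨hq1, hq2, hpq ▸ hα i⟩
      · rintro ⟨q, i⟩ ⟨_, hpi⟩ ⟨q', j⟩ ⟨_, hpj⟩ hne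
        have hij : i ≠ j := by
          rintro rfl
          have hqq : q = q' := (hpi.symm.trans hpj : q = q')
          exact hne (by rw [hqq])
        exact ⟨fun hqq => hij (hinj (by rw [hpi, hpj]; exact hqq)), hij⟩
      · rintro q ⟨hq1, hq2, hq3⟩
        have : ¬ ∀ i, p i ≠ q := fun h => hq3 (hdef q hq1 h hq2)
        push_neg at this
        obtain ⟨i, hi⟩ := this
        exact ⟨(q, i), ⟨⟨hq1, hq2, hq3⟩, hi⟩, rfl⟩
    · refine ⟨Set.range (fun i => (p i, i)), ⟨?_, ?_⟩, ?_⟩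
      · rintro e ⟨i, rfl⟩
        exact ⟨hp i, hvne i, hα i⟩
      · rintro e ⟨i, rfl⟩ f ⟨j, rfl⟩ hne
        have hij : i ≠ j := by rintro rfl; exact hne rfl
        exact ⟨fun h => hij (hinj h), hij⟩
      · intro r _
        exact ⟨(p r, r), ⟨r, rfl⟩, rfl⟩
  · rintro ⟨⟨M₁, hM₁, hcov₁⟩, ⟨M₂, hM₂, hcov₂⟩⟩
    have hM₂cov : ∀ i : Fin n, ∃ q, (q, i) ∈ M₂ := by
      intro i
      obtain ⟨⟨q, j⟩, he, rfl⟩ := hcov₂ i (Set.mem_univ i)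
      exact ⟨q, he⟩
    have hGoodM₁ : ∀ i, BipGood M₁ M₂ i → ∃ q, (q, i) ∈ M₁ := by
      intro i hg
      cases hg with
      | base q _ h1 _ => exact ⟨q, h1⟩
      | step q _ j h1 _ _ => exact ⟨q, h1⟩
    have key : ∀ i : Fin n, ∃ q, ((q, i) ∈ M₁ ∪ M₂) ∧
        (BipGood M₁ M₂ i → (q, i) ∈ M₁) ∧ (¬ BipGood M₁ M₂ i → (q, i) ∈ M₂) := by
      intro i
      by_cases hg : BipGood M₁ M₂ i
      · obtain ⟨q, hq⟩ := hGoodM₁ i hg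
        exact ⟨q, Or.inl hq, fun _ => hq, fun h => absurd hg h⟩
      · obtain ⟨q, hq⟩ := hM₂cov i
        exact ⟨q, Or.inr hq, fun h => absurd h hg, fun _ => hq⟩
    choose p hpE hp1 hp2 using key
    have hpEdge : ∀ i, (p i, i) ∈
        {e : ℕ × Fin n | e.1.Prime ∧ vp e.1 w ≠ 0 ∧ vp e.1 w ∈ αs e.2} := by
      intro i
      rcases hpE i with h | h
      · exact hM₁.1 h
      · exact hM₂.1 h
    have hinj : Function.Injective p := by
      intro i j hij
      by_cases hgi : BipGood M₁ M₂ i <;> by_cases hgj : BipGood M₁ M₂ j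
      · exact matching_right_unique hM₁ (hp1 i hgi) (hij ▸ hp1 j hgj)
      · exact absurd (bipGood_inv hM₁ hM₂ hgi (hp1 i hgi) (hij ▸ hp2 j hgj)) hgj
      · exact absurd (bipGood_inv hM₁ hM₂ hgj (hp1 j hgj) (hij ▸ hp2 i hgi)) hgi
      · exact matching_right_unique hM₂ (hp2 i hgi) (hij ▸ hp2 j hgj)
    refine ⟨hw, p, fun i => (hpEdge i).1, hinj, fun i => (hpEdge i).2.2, ?_⟩
    intro q hq hqne hqv
    by_contra hqα
    obtain ⟨⟨q', i⟩, hi, rfl⟩ : ∃ e ∈ M₁, e.1 = q := hcov₁ q ⟨hq, hqv, hqα⟩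
    by_cases hgi : BipGood M₁ M₂ i
    · exact hqne i (matching_left_unique hM₁ (hp1 i hgi) hi)
    · have hqM₂ : ∃ j, (q', j) ∈ M₂ := by
        by_contra h
        push_neg at h
        exact hgi (BipGood.base q' i hi h)
      obtain ⟨j, hj⟩ := hqM₂
      have hgj : ¬ BipGood M₁ M₂ j := fun hgj =>
        hgi (BipGood.step q' i j hi hj hgj)
      exact hqne j (matching_left_unique hM₂ (hp2 j hgj) hj)
end

section
/- If S = Def(α₁,…,αₙ;α) is a skolemian set and w ∈ S, then with G the bipartite graph on P ∪ [n] (P the set of primes p with v_p(w) ≠ 0, edge (p,i) iff v_p(w) ∈ α_i) and P₀ = {p ∈ P : v_p(w) ∉ α}, there exists a matching of P₀ ∪ [n] in G. -/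
/-- If `w ∈ Def(α₁,…,αₙ;α)` then the bipartite graph `G` on `P ∪ [n]` admits a
single matching covering `P₀ ∪ [n]`. -/
theorem skolemDef_matching_of_mem {d n : ℕ}
    (αs : Fin n → Set (Fin d → ℕ)) (α : Set (Fin d → ℕ))
    (hsl : ∀ i, IsSemilinear (αs i)) (hslα : IsSemilinear α)
    (h0α : (0 : Fin d → ℕ) ∈ α) (h0 : ∀ i, (0 : Fin d → ℕ) ∉ αs i)
    (w : Fin d → ℕ)
    (E : Set (ℕ × Fin n)) (hE : E = {e | e.1.Prime ∧ vp e.1 w ≠ 0 ∧ vp e.1 w ∈ αs e.2})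
    (P₀ : Set ℕ) (hP₀ : P₀ = {q | q.Prime ∧ vp q w ≠ 0 ∧ vp q w ∉ α})
    (hmem : w ∈ SkolemDef αs α) :
    ∃ M, IsBipMatching E M ∧ CoversL M P₀ ∧ CoversR M (Set.univ : Set (Fin n)) := by
  obtain ⟨hpos, p, hp, hinj, hαs, hrest⟩ := hmem
  refine ⟨{e | e.1 = p e.2}, ⟨?_, ?_⟩, ?_, ?_⟩
  · rintro ⟨q, i⟩ he
    simp only [Set.mem_setOf_eq] at he
    subst he
    refine hE ▸ ⟨hp i, fun h => h0 i (h ▸ hαs i), hαs i⟩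
  · rintro ⟨q, i⟩ he ⟨r, j⟩ hf hne
    simp only [Set.mem_setOf_eq] at he hf
    subst he; subst hf
    have hij : i ≠ j := fun h => hne (by rw [h])
    exact ⟨fun h => hij (hinj h), hij⟩
  · intro q hq
    rw [hP₀] at hq
    obtain ⟨hqp, hv, hvα⟩ := hq
    by_cases h : ∀ i, p i ≠ q
    · exact absurd (hrest q hqp h hv) hvα
    · push_neg at h
      obtain ⟨i, hi⟩ := h
      exact ⟨(p i, i), rfl, hi⟩
  · intro i _
    exact ⟨(p i, i), rfl, rfl⟩
end

section
/- The intersection of two skolemian sets is semiskolemian. Concretely, if S = Def(α₁,…,αₙ;α) and S' = Def(β₁,…,β_m;β), then S ∩ S' = ⋃_{P correct} Def((α_i ∩ β_j)_{(i,j)∈P, i,j ≥ 1} together with (α_i ∩ β)_{(i,0)∈P} and (α ∩ β_j)_{(0,j)∈P}; α ∩ β), where the union ranges over correct sets P ⊆ ({0}∪[n]) × ({0}∪[m]). -/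
/-- A set `P ⊆ ({0} ∪ [n]) × ({0} ∪ [m])` (with `none` playing the role of `0`)
is correct if every `i ∈ [n]` is paired with exactly one `j ∈ {0} ∪ [m]` and
every `j ∈ [m]` is paired with exactly one `i ∈ {0} ∪ [n]`. -/
def Correct {n m : ℕ} (P : Set (Option (Fin n) × Option (Fin m))) : Prop :=
  (∀ i : Fin n, ∃! j : Option (Fin m), (some i, j) ∈ P) ∧
  (∀ j : Fin m, ∃! i : Option (Fin n), (i, some j) ∈ P)

/-- The exceptional set attached to a pair `(i,j) ∈ P`: `αᵢ ∩ βⱼ` when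
`i, j ≥ 1`, `αᵢ ∩ β` for `(i, 0)` and `α ∩ βⱼ` for `(0, j)`. -/
def pairSet {d n m : ℕ} (αs : Fin n → Set (Fin d → ℕ)) (α : Set (Fin d → ℕ))
    (βs : Fin m → Set (Fin d → ℕ)) (β : Set (Fin d → ℕ))
    (e : Option (Fin n) × Option (Fin m)) : Set (Fin d → ℕ) :=
  match e with
  | (some i, some j) => αs i ∩ βs j
  | (some i, none) => αs i ∩ β
  | (none, some j) => α ∩ βs j
  | (none, none) => ∅

/-!
A vector `w` lies in `Def(α₁,…,αₙ;α)` through witness primes `p₁,…,pₙ` and in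
`Def(β₁,…,β_m;β)` through witness primes `q₁,…,q_m`. Pairing `i` with `j` when `pᵢ = q_j`, and
with `0` when `pᵢ` is not among the `q_j` (and symmetrically), gives a correct `P`, and the common
primes of the pairs witness `w ∈ Def((α_i ∩ β_j)_{(i,j) ∈ P}; α ∩ β)`: an unpaired `pᵢ` has
nonzero valuation because `0 ∉ αᵢ`, so it is a default prime for `S'`. Conversely, a correct `P`
pairs each `i ≥ 1` with exactly one `j`, so the primes of the pairs `(i, j)` witness `w ∈ S`, while
the primes of the pairs `(0, j)` fall into `α ∩ β_j ⊆ α`.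
-/

section Witness

variable {d : ℕ} {ι κ : Type}

structure IsSkolemWitness (αs : ι → Set (Fin d → ℕ)) (α : Set (Fin d → ℕ)) (w : Fin d → ℕ)
    (p : ι → ℕ) : Prop where
  prime : ∀ i, (p i).Prime
  injective : Function.Injective p
  mem : ∀ i, vp (p i) w ∈ αs i
  mem_default : ∀ q : ℕ, q.Prime → (∀ i, p i ≠ q) → vp q w ≠ 0 → vp q w ∈ α

variable {αs : ι → Set (Fin d → ℕ)} {α : Set (Fin d → ℕ)} {w : Fin d → ℕ}

theorem mem_skolemDef :
    w ∈ SkolemDef αs α ↔ (∀ t, 0 < w t) ∧ ∃ p, IsSkolemWitness αs α w p :=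
  ⟨fun ⟨hw, p, h₁, h₂, h₃, h₄⟩ => ⟨hw, p, h₁, h₂, h₃, h₄⟩,
    fun ⟨hw, p, h₁, h₂, h₃, h₄⟩ => ⟨hw, p, h₁, h₂, h₃, h₄⟩⟩

theorem IsSkolemWitness.comp {γs : κ → Set (Fin d → ℕ)} {γ : Set (Fin d → ℕ)} {r : κ → ℕ}
    (hr : IsSkolemWitness γs γ w r) {f : ι → κ} (hf : Function.Injective f)
    (hαs : ∀ i, γs (f i) ⊆ αs i) (hγ : γ ⊆ α) (hγs : ∀ k ∉ Set.range f, γs k ⊆ α) :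
    IsSkolemWitness αs α w (r ∘ f) where
  prime i := hr.prime (f i)
  injective := hr.injective.comp hf
  mem i := hαs i (hr.mem (f i))
  mem_default s hs hne hv := by
    by_cases hsr : ∃ k, r k = s
    · obtain ⟨k, rfl⟩ := hsr
      have hk : k ∉ Set.range f := by
        rintro ⟨i, rfl⟩
        exact hne i rfl
      exact hγs k hk (hr.mem k)
    · push Not at hsr
      exact hγ (hr.mem_default s hs hsr hv)

theorem IsSkolemWitness.vp_ne_zero {p : ι → ℕ} (hp : IsSkolemWitness αs α w p)
    (h0αs : ∀ i, (0 : Fin d → ℕ) ∉ αs i) (i : ι) : vp (p i) w ≠ 0 :=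
  fun h => h0αs i (h ▸ hp.mem i)

end Witness

section Matching

variable {ι κ α : Type} (p : ι → α) (q : κ → α)

/-- For the witness primes `p` of `S` and `q` of `S'`, this is the correct set `P` whose skolemian
set contains `w`: shared primes are paired with each other, the others with `0`. -/
def IsMatchedPair : Option ι × Option κ → Prop
  | (some i, some j) => p i = q j
  | (some i, none) => p i ∉ Set.range q
  | (none, some j) => q j ∉ Set.range p
  | (none, none) => False

/-- The common label of a matched pair; the value at `(none, none)` is irrelevant. -/
def pairLabel [Inhabited α] : Option ι × Option κ → α
  | (some i, _) => p i
  | (none, some j) => q j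
  | (none, none) => default

variable {p q}

theorem exists_isMatchedPair_some_left (i : ι) : ∃ o, IsMatchedPair p q (some i, o) := by
  by_cases h : p i ∈ Set.range q
  · obtain ⟨j, hj⟩ := h
    exact ⟨some j, hj.symm⟩
  · exact ⟨none, h⟩

theorem exists_isMatchedPair_some_right (j : κ) : ∃ o, IsMatchedPair p q (o, some j) := by
  by_cases h : q j ∈ Set.range p
  · obtain ⟨i, hi⟩ := h
    exact ⟨some i, hi⟩
  · exact ⟨none, h⟩

theorem IsMatchedPair.ne_none {e : Option ι × Option κ} (he : IsMatchedPair p q e) :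
    e ≠ (none, none) := by
  rintro rfl
  exact he

variable [Inhabited α] {e : Option ι × Option κ}

theorem IsMatchedPair.fst_eq_some_iff (hp : Function.Injective p) (he : IsMatchedPair p q e)
    (i : ι) : e.1 = some i ↔ p i = pairLabel p q e := by
  rcases e with ⟨_ | i', _ | j⟩
  · exact he.elim
  · exact ⟨nofun, fun h => absurd ⟨i, h⟩ he⟩
  all_goals simp only [pairLabel, Option.some_inj, hp.eq_iff, eq_comm]

theorem IsMatchedPair.snd_eq_some_iff (hq : Function.Injective q) (he : IsMatchedPair p q e)
    (j : κ) : e.2 = some j ↔ q j = pairLabel p q e := by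
  rcases e with ⟨_ | i, _ | j'⟩
  · exact he.elim
  · simp only [pairLabel, Option.some_inj, hq.eq_iff, eq_comm]
  · exact ⟨nofun, fun h => absurd ⟨j, h⟩ he⟩
  · simp only [pairLabel, Option.some_inj]
    rw [show p i = q j' from he, hq.eq_iff, eq_comm]

theorem injOn_pairLabel (hp : Function.Injective p) (hq : Function.Injective q) :
    Set.InjOn (pairLabel p q) {e | IsMatchedPair p q e} := fun _ he _ he' h =>
  Prod.ext
    (Option.ext fun i => (he.fst_eq_some_iff hp i).trans (h ▸ (he'.fst_eq_some_iff hp i).symm))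
    (Option.ext fun j => (he.snd_eq_some_iff hq j).trans (h ▸ (he'.snd_eq_some_iff hq j).symm))

end Matching

theorem correct_setOf_isMatchedPair {n m : ℕ} {α : Type} [Inhabited α] {p : Fin n → α}
    {q : Fin m → α} (hp : Function.Injective p) (hq : Function.Injective q) :
    Correct {e | IsMatchedPair p q e} := by
  constructor
  · intro i
    obtain ⟨o, ho⟩ := exists_isMatchedPair_some_left (p := p) (q := q) i
    exact ⟨o, ho, fun o' ho' => congrArg Prod.snd (injOn_pairLabel hp hq ho' ho rfl)⟩
  · intro j
    obtain ⟨o, ho⟩ := exists_isMatchedPair_some_right (p := p) (q := q) j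
    refine ⟨o, ho, fun o' ho' => congrArg Prod.fst (injOn_pairLabel hp hq ho' ho ?_)⟩
    exact ((ho'.snd_eq_some_iff hq j).mp rfl).symm.trans ((ho.snd_eq_some_iff hq j).mp rfl)

section PairSet

variable {d n m : ℕ} {αs : Fin n → Set (Fin d → ℕ)} {α : Set (Fin d → ℕ)}
  {βs : Fin m → Set (Fin d → ℕ)} {β : Set (Fin d → ℕ)}

theorem pairSet_some_left_subset (i : Fin n) (o : Option (Fin m)) :
    pairSet αs α βs β (some i, o) ⊆ αs i := by
  cases o <;> exact Set.inter_subset_left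

theorem pairSet_none_left_subset (o : Option (Fin m)) : pairSet αs α βs β (none, o) ⊆ α := by
  cases o
  · exact Set.empty_subset _
  · exact Set.inter_subset_left

theorem pairSet_some_right_subset (o : Option (Fin n)) (j : Fin m) :
    pairSet αs α βs β (o, some j) ⊆ βs j := by
  cases o <;> exact Set.inter_subset_right

theorem pairSet_none_right_subset (o : Option (Fin n)) : pairSet αs α βs β (o, none) ⊆ β := by
  cases o
  · exact Set.empty_subset _
  · exact Set.inter_subset_right

variable {w : Fin d → ℕ}

theorem IsSkolemWitness.isSkolemWitness_pairSet {p : Fin n → ℕ} {q : Fin m → ℕ}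
    (hp : IsSkolemWitness αs α w p) (hq : IsSkolemWitness βs β w q)
    (h0αs : ∀ i, (0 : Fin d → ℕ) ∉ αs i) (h0βs : ∀ j, (0 : Fin d → ℕ) ∉ βs j) :
    IsSkolemWitness
      (fun e : {e // e ∈ {e | IsMatchedPair p q e} ∧ e ≠ (none, none)} =>
        pairSet αs α βs β e.1)
      (α ∩ β) w (fun e => pairLabel p q e.1) where
  prime := by
    rintro ⟨⟨_ | i, _ | j⟩, he, -⟩
    exacts [he.elim, hq.prime j, hp.prime i, hp.prime i]
  injective e e' h := Subtype.ext (injOn_pairLabel hp.injective hq.injective e.2.1 e'.2.1 h)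
  mem := by
    rintro ⟨⟨_ | i, _ | j⟩, he, -⟩
    · exact he.elim
    · exact ⟨hp.mem_default (q j) (hq.prime j) (fun i h => he ⟨i, h⟩) (hq.vp_ne_zero h0βs j),
        hq.mem j⟩
    · exact ⟨hp.mem i,
        hq.mem_default (p i) (hp.prime i) (fun j h => he ⟨j, h⟩) (hp.vp_ne_zero h0αs i)⟩
    · refine ⟨hp.mem i, ?_⟩
      rw [show pairLabel p q (some i, some j) = q j from he]
      exact hq.mem j
  mem_default s hs hne hv := by
    have hps (i : Fin n) : p i ≠ s := by
      obtain ⟨o, ho⟩ := exists_isMatchedPair_some_left (p := p) (q := q) i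
      exact hne ⟨(some i, o), ho, ho.ne_none⟩
    have hqs (j : Fin m) : q j ≠ s := by
      obtain ⟨o, ho⟩ := exists_isMatchedPair_some_right (p := p) (q := q) j
      rw [(ho.snd_eq_some_iff hq.injective j).mp rfl]
      exact hne ⟨(o, some j), ho, ho.ne_none⟩
    exact ⟨hp.mem_default s hs hps hv, hq.mem_default s hs hqs hv⟩

variable {P : Set (Option (Fin n) × Option (Fin m))} {r : {e // e ∈ P ∧ e ≠ (none, none)} → ℕ}

theorem Correct.exists_isSkolemWitness_left (hP : Correct P)
    (hr : IsSkolemWitness (fun e => pairSet αs α βs β e.1) (α ∩ β) w r) :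
    ∃ p, IsSkolemWitness αs α w p := by
  choose o ho ho_unique using hP.1
  refine ⟨_, hr.comp (f := fun i => ⟨(some i, o i), ho i, by simp⟩) ?_
    (fun i => pairSet_some_left_subset i (o i)) Set.inter_subset_left ?_⟩
  · exact fun i i' h => Option.some_injective _ (congrArg (fun e => e.1.1) h)
  · rintro ⟨⟨_ | i, o'⟩, he, _⟩ hk
    · exact pairSet_none_left_subset o'
    · obtain rfl := ho_unique i o' he
      exact absurd ⟨i, rfl⟩ hk

theorem Correct.exists_isSkolemWitness_right (hP : Correct P)
    (hr : IsSkolemWitness (fun e => pairSet αs α βs β e.1) (α ∩ β) w r) :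
    ∃ q, IsSkolemWitness βs β w q := by
  choose o ho ho_unique using hP.2
  refine ⟨_, hr.comp (f := fun j => ⟨(o j, some j), ho j, by simp⟩) ?_
    (fun j => pairSet_some_right_subset (o j) j) Set.inter_subset_right ?_⟩
  · exact fun j j' h => Option.some_injective _ (congrArg (fun e => e.1.2) h)
  · rintro ⟨⟨o', _ | j⟩, he, _⟩ hk
    · exact pairSet_none_right_subset o'
    · obtain rfl := ho_unique j o' he
      exact absurd ⟨j, rfl⟩ hk

end PairSet

theorem skolemDef_inter_general {d n m : ℕ}
    (αs : Fin n → Set (Fin d → ℕ)) (α : Set (Fin d → ℕ))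
    (βs : Fin m → Set (Fin d → ℕ)) (β : Set (Fin d → ℕ))
    (h0αs : ∀ i, (0 : Fin d → ℕ) ∉ αs i) (h0βs : ∀ j, (0 : Fin d → ℕ) ∉ βs j) :
    SkolemDef αs α ∩ SkolemDef βs β =
      ⋃ P ∈ {P : Set (Option (Fin n) × Option (Fin m)) | Correct P},
        SkolemDef
          (fun e : {e : Option (Fin n) × Option (Fin m) // e ∈ P ∧ e ≠ (none, none)} =>
            pairSet αs α βs β e.1)
          (α ∩ β) := by
  ext w
  simp only [Set.mem_inter_iff, Set.mem_iUnion, Set.mem_ofPred_eq, exists_prop, mem_skolemDef]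
  constructor
  · rintro ⟨⟨hw, p, hp⟩, -, q, hq⟩
    exact ⟨_, correct_setOf_isMatchedPair hp.injective hq.injective, hw, _,
      hp.isSkolemWitness_pairSet hq h0αs h0βs⟩
  · rintro ⟨P, hP, hw, r, hr⟩
    exact ⟨⟨hw, hP.exists_isSkolemWitness_left hr⟩, hw, hP.exists_isSkolemWitness_right hr⟩

/-- The intersection of two skolemian sets is the union, over all correct `P`,
of the skolemian sets `Def((αᵢ ∩ βⱼ)_{(i,j) ∈ P}; α ∩ β)`; in particular it is
semiskolemian. -/
theorem skolemDef_inter {d n m : ℕ}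
    (αs : Fin n → Set (Fin d → ℕ)) (α : Set (Fin d → ℕ))
    (βs : Fin m → Set (Fin d → ℕ)) (β : Set (Fin d → ℕ))
    (hslα : ∀ i, IsSemilinear (αs i)) (hslβ : ∀ j, IsSemilinear (βs j))
    (hα : IsSemilinear α) (hβ : IsSemilinear β)
    (h0α : (0 : Fin d → ℕ) ∈ α) (h0β : (0 : Fin d → ℕ) ∈ β)
    (h0αs : ∀ i, (0 : Fin d → ℕ) ∉ αs i) (h0βs : ∀ j, (0 : Fin d → ℕ) ∉ βs j) :
    SkolemDef αs α ∩ SkolemDef βs β =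
      ⋃ P ∈ {P : Set (Option (Fin n) × Option (Fin m)) | Correct P},
        SkolemDef
          (fun e : {e : Option (Fin n) × Option (Fin m) // e ∈ P ∧ e ≠ (none, none)} =>
            pairSet αs α βs β e.1)
          (α ∩ β) :=
  skolemDef_inter_general αs α βs β h0αs h0βs
end

section
/- Semiskolemian subsets of (ℕ_{>0})^d are closed under finite union and finite intersection. -/
/-!
Union is immediate, and intersection reduces to that of two skolemian sets `Def(αs; α)` and
`Def(βs; β)`. For `w` in both, with exceptional primes `p i` and `q j`, the coincidences
`p i = q j` form a partial matching `σ` of the two index sets. Conversely each matching `σ`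
yields a skolemian set with default `α ∩ β` whose exceptional primes are all `p i`, with condition
`αs i ∩ βs (σ i)` (or `αs i ∩ β` if `i` is unmatched), and the unmatched `q j`, with condition
`α ∩ βs j`; the intersection is the union of these finitely many sets. Since `0 ∉ αs i`, the
valuation of `w` at an unmatched `p i` is nonzero, so it falls under the default `β`. The new
conditions are semilinear because semilinear sets are closed under intersection.
-/

open Set Pointwise AddSubmonoid

section Semilinear

variable {d : ℕ}

theorem vadd_closure_range_eq {M : Type*} [AddCommMonoid M] {k : ℕ} (b : M) (per : Fin k → M) :
    b +ᵥ (closure (range per) : Set M) = {v | ∃ c : Fin k → ℕ, v = b + ∑ j, c j • per j} := by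
  ext v
  simp only [mem_vadd_set, SetLike.mem_coe, mem_closure_range_iff_of_fintype, vadd_eq_add,
    mem_ofPred_eq]
  constructor
  · rintro ⟨_, ⟨c, rfl⟩, rfl⟩
    exact ⟨c, rfl⟩
  · rintro ⟨c, rfl⟩
    exact ⟨_, ⟨c, rfl⟩, rfl⟩

theorem isLinear_iff_isLinearSet {A : Set (Fin d → ℕ)} : IsLinear A ↔ IsLinearSet A := by
  constructor
  · rintro ⟨b, k, per, rfl⟩
    exact ⟨b, range per, finite_range per, (vadd_closure_range_eq b per).symm⟩
  · rw [isLinearSet_iff]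
    rintro ⟨b, t, rfl⟩
    have hrange : range (fun j => (t.equivFin.symm j : Fin d → ℕ)) = t := by
      rw [range_comp' Subtype.val, t.equivFin.symm.surjective.range_eq, image_univ,
        Subtype.range_coe_subtype]
      rfl
    exact ⟨b, t.card, _, by rw [← vadd_closure_range_eq, hrange]⟩

theorem isSemilinear_iff_isSemilinearSet {A : Set (Fin d → ℕ)} :
    IsSemilinear A ↔ IsSemilinearSet A := by
  constructor
  · rintro ⟨m, L, hL, rfl⟩
    exact .iUnion fun i => (isLinear_iff_isLinearSet.1 (hL i)).isSemilinearSet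
  · rw [isSemilinearSet_iff]
    rintro ⟨S, hS, rfl⟩
    refine ⟨S.card, fun j => S.equivFin.symm j, fun j => isLinear_iff_isLinearSet.2 (hS _ ?_), ?_⟩
    · exact (S.equivFin.symm j).2
    · rw [sUnion_eq_iUnion]
      exact (S.equivFin.symm.surjective.iUnion_comp (fun s : S => (s : Set (Fin d → ℕ)))).symm

theorem IsSemilinear.inter {A B : Set (Fin d → ℕ)} (hA : IsSemilinear A) (hB : IsSemilinear B) :
    IsSemilinear (A ∩ B) := by
  rw [isSemilinear_iff_isSemilinearSet] at hA hB ⊢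
  exact hA.inter hB

end Semilinear

namespace PEquiv

variable {ι κ : Type*}

instance instFinite [Finite ι] [Finite κ] : Finite (ι ≃. κ) :=
  Finite.of_injective _ DFunLike.coe_injective

noncomputable def ofCommonValues {β : Type*} {f : ι → β} {g : κ → β}
    (hf : f.Injective) (hg : g.Injective) : ι ≃. κ where
  toFun i := Function.partialInv g (f i)
  invFun j := Function.partialInv f (g j)
  inv i j := by rw [hf.isPartialInv, hg.isPartialInv, eq_comm]

theorem ofCommonValues_eq_some_iff {β : Type*} {f : ι → β} {g : κ → β}
    (hf : f.Injective) (hg : g.Injective) {i : ι} {j : κ} :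
    ofCommonValues hf hg i = some j ↔ g j = f i :=
  hg.isPartialInv j (f i)

def toSumUnmatched (σ : ι ≃. κ) (j : κ) : ι ⊕ {j : κ // σ.symm j = none} :=
  match h : σ.symm j with
  | some i => .inl i
  | none => .inr ⟨j, h⟩

variable {σ : ι ≃. κ} {i : ι} {j : κ}

theorem toSumUnmatched_of_symm_eq_some (h : σ.symm j = some i) :
    σ.toSumUnmatched j = .inl i := by
  unfold toSumUnmatched
  split <;> simp_all

theorem toSumUnmatched_of_symm_eq_none (h : σ.symm j = none) :
    σ.toSumUnmatched j = .inr ⟨j, h⟩ := by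
  unfold toSumUnmatched
  split <;> simp_all

theorem sumElim_toSumUnmatched (j : κ) :
    Sum.elim σ (some ∘ Subtype.val) (σ.toSumUnmatched j) = some j := by
  cases hj : σ.symm j with
  | some i => simpa [toSumUnmatched_of_symm_eq_some hj] using σ.eq_some_iff.1 hj
  | none => simp [toSumUnmatched_of_symm_eq_none hj]

theorem toSumUnmatched_injective : σ.toSumUnmatched.Injective :=
  .of_comp (f := Sum.elim σ (some ∘ Subtype.val)) fun j j' h => by
    simpa [sumElim_toSumUnmatched] using h

end PEquiv

section Merging

variable {d : ℕ} {ι κ : Type}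

def mergedFamily (αs : ι → Set (Fin d → ℕ)) (βs : κ → Set (Fin d → ℕ))
    (α β : Set (Fin d → ℕ)) (σ : ι ≃. κ) : ι ⊕ {j : κ // σ.symm j = none} → Set (Fin d → ℕ) :=
  Sum.elim (fun i => αs i ∩ (σ i).elim β βs) (fun j => α ∩ βs j)

variable {αs : ι → Set (Fin d → ℕ)} {βs : κ → Set (Fin d → ℕ)} {α β : Set (Fin d → ℕ)}

theorem skolemDef_inter_subset_iUnion (h0αs : ∀ i, 0 ∉ αs i) (h0βs : ∀ j, 0 ∉ βs j) :
    SkolemDef αs α ∩ SkolemDef βs β ⊆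
      ⋃ σ : ι ≃. κ, SkolemDef (mergedFamily αs βs α β σ) (α ∩ β) := by
  rintro w ⟨⟨hw, p, hp, hpinj, hpα, hpd⟩, ⟨-, q, hq, hqinj, hqβ, hqd⟩⟩
  set σ := PEquiv.ofCommonValues hpinj hqinj
  have hσ : ∀ i j, σ i = some j ↔ q j = p i := fun _ _ => PEquiv.ofCommonValues_eq_some_iff ..
  have hpq : ∀ i j, σ i = none → q j ≠ p i := fun i j hi hji => by simp [(hσ i j).2 hji] at hi
  have hqp : ∀ i j, σ.symm j = none → p i ≠ q j := fun i j hj hij => by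
    simp [σ.eq_some_iff.2 ((hσ i j).2 hij.symm)] at hj
  refine mem_iUnion.2 ⟨σ, hw, Sum.elim p (q ∘ Subtype.val), ?_, ?_, ?_, ?_⟩
  · rintro (i | j)
    exacts [hp i, hq j]
  · rintro (i | ⟨j, hj⟩) (i' | ⟨j', hj'⟩) h
    · exact congrArg _ (hpinj h)
    · exact absurd h (hqp i j' hj')
    · exact absurd h.symm (hqp i' j hj)
    · exact congrArg _ (Subtype.ext (hqinj h))
  · rintro (i | ⟨j, hj⟩)
    · refine ⟨hpα i, ?_⟩
      cases hi : σ i with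
      | none => exact hqd (p i) (hp i) (fun j => hpq i j hi) fun h0 => h0αs i (h0 ▸ hpα i)
      | some j =>
        show vp (p i) w ∈ βs j
        exact (hσ i j).1 hi ▸ hqβ j
    · exact ⟨hpd (q j) (hq j) (fun i => hqp i j hj) fun h0 => h0βs j (h0 ▸ hqβ j), hqβ j⟩
  · intro r hr hrP h0
    have hpr : ∀ i, p i ≠ r := fun i => hrP (.inl i)
    refine ⟨hpd r hr hpr h0, hqd r hr (fun j hjr => ?_) h0⟩
    cases hj : σ.symm j with
    | none => exact hrP (.inr ⟨j, hj⟩) hjr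
    | some i => exact hpr i (((hσ i j).1 (σ.eq_some_iff.1 hj)).symm.trans hjr)

theorem skolemDef_mergedFamily_subset_left (σ : ι ≃. κ) :
    SkolemDef (mergedFamily αs βs α β σ) (α ∩ β) ⊆ SkolemDef αs α := by
  rintro w ⟨hw, P, hP, hPinj, hPmem, hPd⟩
  refine ⟨hw, P ∘ .inl, fun i => hP _, hPinj.comp Sum.inl_injective,
    fun i => (hPmem (.inl i)).1, fun r hr hrp h0 => ?_⟩
  by_cases hrP : ∃ j, P (.inr j) = r
  · obtain ⟨j, rfl⟩ := hrP
    exact (hPmem (.inr j)).1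
  · exact (hPd r hr (Sum.forall.2 ⟨hrp, fun j hj => hrP ⟨j, hj⟩⟩) h0).1

theorem skolemDef_mergedFamily_subset_right (σ : ι ≃. κ) :
    SkolemDef (mergedFamily αs βs α β σ) (α ∩ β) ⊆ SkolemDef βs β := by
  rintro w ⟨hw, P, hP, hPinj, hPmem, hPd⟩
  refine ⟨hw, P ∘ σ.toSumUnmatched, fun j => hP _, hPinj.comp PEquiv.toSumUnmatched_injective,
    fun j => ?_, fun r hr hrq h0 => ?_⟩
  · cases hj : σ.symm j with
    | none => simpa [PEquiv.toSumUnmatched_of_symm_eq_none hj] using (hPmem (.inr ⟨j, hj⟩)).2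
    | some i =>
      simpa [PEquiv.toSumUnmatched_of_symm_eq_some hj, mergedFamily, σ.eq_some_iff.1 hj]
        using (hPmem (.inl i)).2
  by_cases hrP : ∃ x, P x = r
  · obtain ⟨i | j, rfl⟩ := hrP
    · cases hi : σ i with
      | none => simpa [mergedFamily, hi] using (hPmem (.inl i)).2
      | some j =>
        exact absurd (by simp [PEquiv.toSumUnmatched_of_symm_eq_some (σ.eq_some_iff.2 hi)])
          (hrq j)
    · exact absurd (by simp [PEquiv.toSumUnmatched_of_symm_eq_none j.2]) (hrq j)
  · exact (hPd r hr (fun x hx => hrP ⟨x, hx⟩) h0).2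

theorem skolemDef_inter_eq_iUnion (h0αs : ∀ i, 0 ∉ αs i) (h0βs : ∀ j, 0 ∉ βs j) :
    SkolemDef αs α ∩ SkolemDef βs β =
      ⋃ σ : ι ≃. κ, SkolemDef (mergedFamily αs βs α β σ) (α ∩ β) :=
  (skolemDef_inter_subset_iUnion h0αs h0βs).antisymm <| iUnion_subset fun σ =>
    subset_inter (skolemDef_mergedFamily_subset_left σ) (skolemDef_mergedFamily_subset_right σ)

end Merging

section Skolemian

variable {d : ℕ}

theorem skolemDef_comp_equiv {ι ι' : Type} (e : ι' ≃ ι) (αs : ι → Set (Fin d → ℕ))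
    (α : Set (Fin d → ℕ)) : SkolemDef (αs ∘ e) α = SkolemDef αs α := by
  ext w
  constructor
  · rintro ⟨hw, p, hp, hpinj, hpα, hpd⟩
    refine ⟨hw, p ∘ e.symm, fun i => hp _, hpinj.comp e.symm.injective,
      fun i => by simpa using hpα (e.symm i), fun r hr hrp => hpd r hr fun i => ?_⟩
    simpa using hrp (e i)
  · rintro ⟨hw, p, hp, hpinj, hpα, hpd⟩
    exact ⟨hw, p ∘ e, fun i => hp _, hpinj.comp e.injective, fun i => hpα (e i),
      fun r hr hrp => hpd r hr fun i => by simpa using hrp (e.symm i)⟩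

theorem isSkolemian_skolemDef {ι : Type} [Finite ι] {αs : ι → Set (Fin d → ℕ)}
    {α : Set (Fin d → ℕ)} (hαs : ∀ i, IsSemilinear (αs i)) (hα : IsSemilinear α)
    (h0α : 0 ∈ α) (h0αs : ∀ i, 0 ∉ αs i) : IsSkolemian (SkolemDef αs α) := by
  obtain ⟨n, ⟨e⟩⟩ := Finite.exists_equiv_fin ι
  exact ⟨n, αs ∘ e.symm, α, fun _ => hαs _, hα, h0α, fun _ => h0αs _,
    (skolemDef_comp_equiv e.symm αs α).symm⟩

theorem IsSkolemian.isSemiskolemian {S : Set (Fin d → ℕ)} (h : IsSkolemian S) :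
    IsSemiskolemian S :=
  ⟨1, fun _ => S, fun _ => h, (iUnion_const S).symm⟩

theorem IsSemiskolemian.iUnion {κ : Type} [Finite κ] {S : κ → Set (Fin d → ℕ)}
    (h : ∀ k, IsSemiskolemian (S k)) : IsSemiskolemian (⋃ k, S k) := by
  choose m T hT hST using h
  obtain ⟨n, ⟨e⟩⟩ := Finite.exists_equiv_fin (Σ k, Fin (m k))
  refine ⟨n, fun j => T (e.symm j).1 (e.symm j).2, fun j => hT _ _, ?_⟩
  simp_rw [hST, e.symm.surjective.iUnion_comp fun x => T x.1 x.2, iUnion_sigma]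

theorem IsSemiskolemian.union {S T : Set (Fin d → ℕ)} (hS : IsSemiskolemian S)
    (hT : IsSemiskolemian T) : IsSemiskolemian (S ∪ T) := by
  rw [union_eq_iUnion]
  exact .iUnion (Bool.forall_bool.2 ⟨hT, hS⟩)

theorem IsSkolemian.isSemiskolemian_inter {S T : Set (Fin d → ℕ)} (hS : IsSkolemian S)
    (hT : IsSkolemian T) : IsSemiskolemian (S ∩ T) := by
  obtain ⟨n, αs, α, hαs, hα, h0α, h0αs, rfl⟩ := hS
  obtain ⟨m, βs, β, hβs, hβ, h0β, h0βs, rfl⟩ := hT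
  rw [skolemDef_inter_eq_iUnion h0αs h0βs]
  refine .iUnion fun σ => (isSkolemian_skolemDef ?_ (hα.inter hβ) ⟨h0α, h0β⟩ ?_).isSemiskolemian
  · rintro (i | j)
    · show IsSemilinear (αs i ∩ (σ i).elim β βs)
      cases σ i
      exacts [(hαs i).inter hβ, (hαs i).inter (hβs _)]
    · exact hα.inter (hβs j)
  · rintro (i | j) h0
    exacts [h0αs i h0.1, h0βs j h0.2]

theorem IsSemiskolemian.inter {S T : Set (Fin d → ℕ)} (hS : IsSemiskolemian S)
    (hT : IsSemiskolemian T) : IsSemiskolemian (S ∩ T) := by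
  obtain ⟨m, S', hS', rfl⟩ := hS
  obtain ⟨n, T', hT', rfl⟩ := hT
  rw [iUnion_inter_iUnion]
  exact .iUnion fun i => .iUnion fun j => (hS' i).isSemiskolemian_inter (hT' j)

end Skolemian

/-- Semiskolemian subsets of `(ℕ_{>0})^d` are closed under (finite) union and
(finite) intersection. -/
theorem semiskolemian_union_inter {d : ℕ} (S T : Set (Fin d → ℕ))
    (hS : IsSemiskolemian S) (hT : IsSemiskolemian T) :
    IsSemiskolemian (S ∪ T) ∧ IsSemiskolemian (S ∩ T) :=
  ⟨hS.union hT, hS.inter hT⟩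
end

section
/- Let S = Def(α₁,…,αₙ;α) ⊆ (ℕ_{>0})^d and let x ∈ [d] be a coordinate. Then the projection of S away from coordinate x equals Def(π_x(α₁),…,π_x(αₙ); π_x(α)), where π_x denotes deleting the x-th coordinate. -/
/-- Projecting away a coordinate `x` of a skolemian set
`Def(α₁,…,αₙ;α) ⊆ (ℕ_{>0})^{d+1}` yields
`Def(π_x(α₁),…,π_x(αₙ); π_x(α))`, where `π_x` deletes the `x`-th coordinate. -/
theorem skolemDef_proj {d n : ℕ} (x : Fin (d + 1))
    (αs : Fin n → Set (Fin (d + 1) → ℕ)) (α : Set (Fin (d + 1) → ℕ))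
    (hsl : ∀ i, IsSemilinear (αs i)) (hslα : IsSemilinear α)
    (h0α : (0 : Fin (d + 1) → ℕ) ∈ α) (h0 : ∀ i, (0 : Fin (d + 1) → ℕ) ∉ αs i) :
    (fun w : Fin (d + 1) → ℕ => w ∘ x.succAbove) '' SkolemDef αs α =
      SkolemDef (fun i => (fun v : Fin (d + 1) → ℕ => v ∘ x.succAbove) '' αs i)
        ((fun v : Fin (d + 1) → ℕ => v ∘ x.succAbove) '' α) := by
  classical
  ext u
  simp only [Set.mem_image, SkolemDef, Set.mem_setOf_eq]
  constructor
  · rintro ⟨w, ⟨hpos, p, hp, hinj, hαs, hα⟩, rfl⟩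
    refine ⟨fun t => hpos _, p, hp, hinj, fun i => ⟨vp (p i) w, hαs i, rfl⟩, ?_⟩
    intro q hq hne hz
    refine ⟨vp q w, hα q hq hne ?_, rfl⟩
    intro h00
    apply hz
    funext t
    exact congrFun h00 (x.succAbove t)
  · rintro ⟨hpos, p, hp, hinj, hαs, hα⟩
    choose v hv1 hv2 using hαs
    set g : ℕ → (Fin (d + 1) → ℕ) := fun q =>
      if h : q.Prime ∧ (∀ i, p i ≠ q) ∧ vp q u ≠ 0 then (hα q h.1 h.2.1 h.2.2).choose
      else 0 with hgdef
    have hgspec : ∀ q (h : q.Prime ∧ (∀ i, p i ≠ q) ∧ vp q u ≠ 0),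
        g q ∈ α ∧ g q ∘ x.succAbove = vp q u := by
      intro q h
      have := (hα q h.1 h.2.1 h.2.2).choose_spec
      simpa [hgdef, dif_pos h] using this
    set E : ℕ → ℕ := fun q =>
      if h : ∃ i, p i = q then v h.choose x else g q x with hEdef
    set Q : Finset ℕ := Finset.image p Finset.univ ∪ (∏ t, u t).primeFactors with hQdef
    have hQprime : ∀ q ∈ Q, q.Prime := by
      intro q hq
      rcases Finset.mem_union.1 hq with h | h
      · obtain ⟨i, _, rfl⟩ := Finset.mem_image.1 h
        exact hp i
      · exact Nat.prime_of_mem_primeFactors h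
    set N : ℕ := ∏ q ∈ Q, q ^ E q with hNdef
    have hN0 : N ≠ 0 :=
      Finset.prod_ne_zero_iff.2 fun q hq => pow_ne_zero _ (hQprime q hq).pos.ne'
    have hNfact : ∀ r, r.Prime → padicValNat r N = if r ∈ Q then E r else 0 := by
      intro r hr
      rw [← Nat.factorization_def _ hr, hNdef,
        Nat.factorization_prod (fun q hq => pow_ne_zero _ (hQprime q hq).pos.ne')]
      rw [Finsupp.finset_sum_apply]
      rw [Finset.sum_congr rfl (fun q hq => by
        rw [Nat.Prime.factorization_pow (hQprime q hq), Finsupp.single_apply])]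
      exact Finset.sum_ite_eq' Q r E
    have hEp : ∀ i, E (p i) = v i x := by
      intro i
      have h : ∃ j, p j = p i := ⟨i, rfl⟩
      have h2 : h.choose = i := hinj h.choose_spec
      simp only [hEdef, dif_pos h, h2]
    set w : Fin (d + 1) → ℕ := x.insertNth N u with hwdef
    have hwx : w x = N := by simp [hwdef]
    have hws : ∀ t, w (x.succAbove t) = u t := fun t => by simp [hwdef]
    have hwσ : (fun w : Fin (d + 1) → ℕ => w ∘ x.succAbove) w = u := funext hws
    refine ⟨w, ⟨?_, p, hp, hinj, ?_, ?_⟩, hwσ⟩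
    · intro s
      by_cases hs : s = x
      · subst hs; rw [hwx]; exact Nat.pos_of_ne_zero hN0
      · obtain ⟨t, rfl⟩ := Fin.exists_succAbove_eq (Ne.symm (Ne.intro hs)).symm
        rw [hws]; exact hpos t
    · intro i
      have : vp (p i) w = v i := by
        funext s
        by_cases hs : s = x
        · rw [hs]
          show padicValNat (p i) (w x) = v i x
          rw [hwx, hNfact _ (hp i),
            if_pos (Finset.mem_union_left _ (Finset.mem_image.2 ⟨i, Finset.mem_univ i, rfl⟩)),
            hEp]
        · obtain ⟨t, rfl⟩ := Fin.exists_succAbove_eq (Ne.symm (Ne.intro hs)).symm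
          show padicValNat (p i) (w (x.succAbove t)) = v i (x.succAbove t)
          rw [hws]
          exact (congrFun (hv2 i) t).symm
      rw [this]; exact hv1 i
    · intro q hq hne hz
      -- first show vp q u ≠ 0
      have hQE : padicValNat q N = if q ∈ Q then E q else 0 := hNfact q hq
      have hnex : ¬∃ i, p i = q := by rintro ⟨i, rfl⟩; exact hne i rfl
      have hvpu : vp q u ≠ 0 := by
        intro h00
        apply hz
        funext s
        by_cases hs : s = x
        · rw [hs]
          show padicValNat q (w x) = 0
          have hg0 : g q = 0 := by
            rw [hgdef]
            exact dif_neg (by rintro ⟨_, _, h3⟩; exact h3 h00)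
          have hE0 : E q = 0 := by rw [hEdef]; simp only [dif_neg hnex, hg0]; rfl
          rw [hwx, hQE, hE0]
          exact ite_self 0
        · obtain ⟨t, rfl⟩ := Fin.exists_succAbove_eq (Ne.symm (Ne.intro hs)).symm
          show padicValNat q (w (x.succAbove t)) = 0
          rw [hws]
          exact congrFun h00 t
      have hcond : q.Prime ∧ (∀ i, p i ≠ q) ∧ vp q u ≠ 0 := ⟨hq, hne, hvpu⟩
      obtain ⟨hgα, hgσ⟩ := hgspec q hcond
      have hqQ : q ∈ Q := by
        obtain ⟨t, ht⟩ : ∃ t, vp q u t ≠ 0 := by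
          by_contra hall
          push_neg at hall
          exact hvpu (funext hall)
        have hdvd : q ∣ u t := by
          by_contra hnd
          exact ht (padicValNat.eq_zero_of_not_dvd hnd)
        refine Finset.mem_union_right _ (Nat.mem_primeFactors.2 ⟨hq, ?_, ?_⟩)
        · exact hdvd.trans (Finset.dvd_prod_of_mem u (Finset.mem_univ t))
        · exact Finset.prod_ne_zero_iff.2 fun t _ => (hpos t).ne'
      have : vp q w = g q := by
        funext s
        by_cases hs : s = x
        · rw [hs]
          show padicValNat q (w x) = g q x
          rw [hwx, hQE, if_pos hqQ, hEdef]
          simp only [dif_neg hnex]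
        · obtain ⟨t, rfl⟩ := Fin.exists_succAbove_eq (Ne.symm (Ne.intro hs)).symm
          show padicValNat q (w (x.succAbove t)) = g q (x.succAbove t)
          rw [hws]
          exact (congrFun hgσ t).symm
      rw [this]; exact hgα
end
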